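/- arXiv:1712.02669 — 2 statements merged into one kernel-verified Lean document; each statement's English description precedes it below -/
import Mathlib

section
/- Reflection for formulas of the ω-th-order language of set theory with parameters of third or higher order is inconsistent, as witnessed by the following explicit counterexample: let κ be any nonzero ordinal, let φ(X) be the formula (with one free third-order variable X) asserting that every element of X is a bounded set of ordinals, and let A = {{α : α < β} : β < κ}. Then φ(A) holds in V_κ (every element of A is a set of ordinals bounded strictly below κ), but for every ordinal δ < κ the relativization φ^δ(A^δ) fails, because A^δ = {b ∩ V_δ : b ∈ A} contains the set {α : α < δ} of all ordinals below δ, which is not bounded strictly below δ. -/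
/- STATEMENT 0.

`Vset α` is the collection of sets of rank `< α`, i.e. the level `V_α` of the cumulative
hierarchy (viewed as a set of `ZFSet`s).  A third-order parameter over `V_κ` is a collection
`A` of subsets of `V_κ`.  The formula `φ(X)` says: every element of `X` is a bounded set of
ordinals (a set of ordinals bounded strictly below the height of the universe).  We take
`A = {{α : α < β} : β < κ}` (where `{α : α < β}` is rendered as the set of von Neumann
ordinals of rank `< β` inside `V_κ`), and show `φ(A)` holds in `V_κ`, while for every
`δ < κ` the relativization `φ^δ(A^δ)` fails, because `A^δ = {b ∩ V_δ : b ∈ A}` contains the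
set of all ordinals below `δ`, which is not bounded strictly below `δ`. -/

/-- The `α`-th level of the cumulative hierarchy, as a collection of `ZFSet`s. -/
def Vset (α : Ordinal) : Set ZFSet := {x | x.rank < α}

/-- The set (as a subcollection of `V_κ`) of all von Neumann ordinals of rank `< β`,
i.e. the rendering of `{α : α < β}`. -/
def ordsBelow (β : Ordinal) : Set ZFSet := {x | x.IsOrdinal ∧ x.rank < β}

/-- The third-order parameter `A = {{α : α < β} : β < κ}`. -/
def thirdOrderA (κ : Ordinal) : Set (Set ZFSet) := {b | ∃ β < κ, b = ordsBelow β}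

/-- `b` is a set of ordinals bounded strictly below `γ`: there is `δ < γ` such that every
element of `b` is an ordinal smaller than `δ`. -/
def BoundedSetOfOrds (γ : Ordinal) (b : Set ZFSet) : Prop :=
  (∀ x ∈ b, x.IsOrdinal) ∧ ∃ δ < γ, ∀ x ∈ b, x.rank < δ

/-- `φ^γ(X)`: every element of `X` is a set of ordinals bounded strictly below `γ`
(the relativization of `φ` to `V_γ`; at `γ = κ` this is `φ` itself over `V_κ`). -/
def PhiAt (γ : Ordinal) (X : Set (Set ZFSet)) : Prop :=
  ∀ b ∈ X, BoundedSetOfOrds γ b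

/-- The relativization `X^δ = {b ∩ V_δ : b ∈ X}` of a third-order parameter. -/
def relThird (X : Set (Set ZFSet)) (δ : Ordinal) : Set (Set ZFSet) :=
  (fun b => b ∩ Vset δ) '' X

theorem toZFSet_mem_ordsBelow_iff {o β : Ordinal} : o.toZFSet ∈ ordsBelow β ↔ o < β := by
  simp [ordsBelow, ZFSet.isOrdinal_toZFSet]

theorem ordsBelow_inter_Vset (β : Ordinal) : ordsBelow β ∩ Vset β = ordsBelow β :=
  Set.inter_eq_left.2 fun _ hx => hx.2

theorem ordsBelow_mem_relThird {κ δ : Ordinal} (hδ : δ < κ) :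
    ordsBelow δ ∈ relThird (thirdOrderA κ) δ :=
  ⟨ordsBelow δ, ⟨δ, hδ, rfl⟩, ordsBelow_inter_Vset δ⟩

theorem not_exists_rank_bound_ordsBelow (δ : Ordinal) :
    ¬ ∃ γ < δ, ∀ x ∈ ordsBelow δ, x.rank < γ := by
  rintro ⟨γ, hγ, hbound⟩
  have h := hbound γ.toZFSet (toZFSet_mem_ordsBelow_iff.2 hγ)
  rw [Ordinal.rank_toZFSet] at h
  exact h.false

theorem phiAt_thirdOrderA (κ : Ordinal) : PhiAt κ (thirdOrderA κ) := by
  rintro b ⟨β, hβ, rfl⟩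
  exact ⟨fun _ hx => hx.1, β, hβ, fun _ hx => hx.2⟩

theorem statement0_general (κ : Ordinal) :
    PhiAt κ (thirdOrderA κ) ∧
    ∀ δ < κ,
      ordsBelow δ ∈ relThird (thirdOrderA κ) δ ∧
      ¬ (∃ γ' < δ, ∀ x ∈ ordsBelow δ, x.rank < γ') ∧
      ¬ PhiAt δ (relThird (thirdOrderA κ) δ) := by
  refine ⟨phiAt_thirdOrderA κ, fun δ hδ => ?_⟩
  have hunbounded := not_exists_rank_bound_ordsBelow δ
  exact ⟨ordsBelow_mem_relThird hδ, hunbounded,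
    fun hphi => hunbounded (hphi _ (ordsBelow_mem_relThird hδ)).2⟩

/-- Reflection with third-order parameters is inconsistent, via the explicit
counterexample: `φ(A)` holds in `V_κ`, but for every `δ < κ` the relativization
`φ^δ(A^δ)` fails, since `A^δ` contains the set of all ordinals below `δ`, which is not
bounded strictly below `δ`. -/
theorem statement0 (κ : Ordinal) (hκ : κ ≠ 0) :
    PhiAt κ (thirdOrderA κ) ∧
    ∀ δ < κ,
      ordsBelow δ ∈ relThird (thirdOrderA κ) δ ∧
      ¬ (∃ γ' < δ, ∀ x ∈ ordsBelow δ, x.rank < γ') ∧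
      ¬ PhiAt δ (relThird (thirdOrderA κ) δ) :=
  statement0_general κ
end

section
/- For every theorem φ of Bernays' theory B_1, the relativization of φ to V_1 (the 2-class of all classes) is a theorem of Marshall's theory B_2. -/
universe u v

/-- Formulas of the first-order language of set theory (one binary relation `∈`),
with named variables. -/
inductive FOF : Type
  | eq (i j : ℕ)
  | mem (i j : ℕ)
  | not (φ : FOF)
  | and (φ ψ : FOF)
  | or (φ ψ : FOF)
  | all (i : ℕ) (φ : FOF)
  | ex (i : ℕ) (φ : FOF)

/-- Satisfaction of a first-order formula in the structure with universe the elements of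
`M` satisfying `D`, with membership interpreted by `E` (so `FOF.Eval E D φ ρ` is the
relativization of `φ` to `D`). -/
def FOF.Eval {M : Type*} (E : M → M → Prop) (D : M → Prop) : FOF → (ℕ → M) → Prop
  | .eq i j, ρ => ρ i = ρ j
  | .mem i j, ρ => E (ρ i) (ρ j)
  | .not φ, ρ => ¬ FOF.Eval E D φ ρ
  | .and φ ψ, ρ => FOF.Eval E D φ ρ ∧ FOF.Eval E D ψ ρ
  | .or φ ψ, ρ => FOF.Eval E D φ ρ ∨ FOF.Eval E D ψ ρ
  | .all i φ, ρ => ∀ x, D x → FOF.Eval E D φ (Function.update ρ i x)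
  | .ex i φ, ρ => ∃ x, D x ∧ FOF.Eval E D φ (Function.update ρ i x)

/-- The free variables of a first-order formula. -/
def FOF.free : FOF → Set ℕ
  | .eq i j => {i, j}
  | .mem i j => {i, j}
  | .not φ => φ.free
  | .and φ ψ => φ.free ∪ ψ.free
  | .or φ ψ => φ.free ∪ ψ.free
  | .all i φ => φ.free \ {i}
  | .ex i φ => φ.free \ {i}
section BernaysB1

variable {M : Type u} (E : M → M → Prop)

/-- In Bernays' class theory the objects of the domain of discourse are classes; a class
is a set iff it is a member of some class. -/
def IsSetB1 (x : M) : Prop := ∃ c, E x c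

/-- `(M, E)` is a model of Bernays' theory `B₁`: extensionality, class specification,
subsets, the Bernays reflection schema `φ(A) → ∃u (u transitive set ∧ φ^{P(u)}(A ∩ u))`,
foundation, and choice for sets. -/
def SatB1 : Prop :=
  -- (A1) extensionality
  (∀ A B : M, (∀ x, E x A ↔ E x B) → A = B) ∧
  -- (A2) class specification (for any formula φ, with parameters)
  (∀ (φ : FOF) (ρ : ℕ → M), ∃ A : M, ∀ x,
      E x A ↔ (FOF.Eval E (fun _ => True) φ (Function.update ρ 0 x) ∧ IsSetB1 E x)) ∧
  -- (A3) subsets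
  (∀ A B : M, IsSetB1 E A → (∀ x, E x B → E x A) → IsSetB1 E B) ∧
  -- (A4) reflection: for every formula φ(x) with one free variable,
  --      φ(A) → ∃u (u a transitive set ∧ φ^{P(u)}(A ∩ u))
  (∀ φ : FOF, φ.free ⊆ {0} → ∀ ρ : ℕ → M,
      FOF.Eval E (fun _ => True) φ ρ →
      ∃ u b : M, IsSetB1 E u ∧ (∀ y, E y u → ∀ z, E z y → E z u) ∧
        (∀ z, E z b ↔ (E z (ρ 0) ∧ E z u)) ∧
        FOF.Eval E (fun x => ∀ z, E z x → E z u) φ (Function.update ρ 0 b)) ∧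
  -- (A5) foundation
  (∀ A : M, (∃ x, E x A) → ∃ x, E x A ∧ ∀ z, ¬ (E z x ∧ E z A)) ∧
  -- (A6) choice for sets
  (∀ x : M, IsSetB1 E x →
    (∀ y y', E y x → E y' x → y ≠ y' → ¬ ∃ z, E z y ∧ E z y') →
    ∃ x' : M, ∀ y, E y x → (∃ z, E z y) → ∃! z, E z y ∧ E z x')

end BernaysB1
section MarshallB2

variable {M : Type u} (E : M → M → Prop)

/-- In Marshall's theory `B₂` the objects of the domain of discourse are 2-classes; an
object is a class iff it is a member of some 2-class. -/
def IsClassB2 (x : M) : Prop := ∃ c, E x c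

/-- An object is a set iff it is a member of some class. -/
def IsSetB2 (x : M) : Prop := ∃ c, IsClassB2 E c ∧ E x c

/-- `STC(v)`: `v` is transitive and every sub-2-class of an element of `v` is an element
of `v`. -/
def STCI (v : M) : Prop :=
  (∀ y, E y v → ∀ z, E z y → E z v) ∧
  (∀ y, E y v → ∀ x, (∀ z, E z x → E z y) → E x v)

/-- `z` is empty. -/
def EmptyB2 (z : M) : Prop := ∀ w, ¬ E w z

/-- `p` is the Kuratowski pair `⟨a, b⟩`. -/
def KpairB2 (p a b : M) : Prop :=
  ∀ z, E z p ↔ ((∀ w, E w z ↔ w = a) ∨ (∀ w, E w z ↔ (w = a ∨ w = b)))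

/-- `p` is the ordered pair of classes `[x, y] = x × {0} ∪ y × {1}`. -/
def CPairI (p x y : M) : Prop :=
  ∀ z, E z p ↔
    ((∃ a t, E a x ∧ EmptyB2 E t ∧ KpairB2 E z a t) ∨
     (∃ b t, E b y ∧ (∀ w, E w t ↔ EmptyB2 E w) ∧ KpairB2 E z b t))

/-- `A(u)`: `u ∩ V₀` is a set, `STC(u ∩ V₀)` holds, and `u` is closed under ordered pairs
`[x, y]`.  (`w` denotes `u ∩ V₀`.) -/
def AuI (u : M) : Prop :=
  (∃ w, (∀ z, E z w ↔ (E z u ∧ IsSetB2 E z)) ∧ IsSetB2 E w ∧ STCI E w) ∧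
  (∀ x y, E x u → E y u → ∃ p, E p u ∧ CPairI E p x y)

/-- `b = A^u`: `b` is `A ∩ u` if `A` is a class, and `{x ∩ u : x ∈ A ∩ u}` otherwise. -/
def RelParamB2 (u A b : M) : Prop :=
  (IsClassB2 E A ∧ ∀ z, E z b ↔ (E z A ∧ E z u)) ∨
  (¬ IsClassB2 E A ∧
    ∀ z, E z b ↔ ∃ x, E x A ∧ E x u ∧ (∀ w, E w z ↔ (E w x ∧ E w u)))

/-- `(M, E)` is a model of Marshall's theory `B₂`: 2-class specification, extensionality,
the reflection schema `φ(A) → ∃u (A(u) ∧ φ^{PP(u ∩ V₀)}(A^u))`, foundation, and choice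
for sets. -/
def SatB2 : Prop :=
  -- (A1) 2-class specification
  (∀ (φ : FOF) (ρ : ℕ → M), ∃ A : M, ∀ x,
      E x A ↔ (FOF.Eval E (fun _ => True) φ (Function.update ρ 0 x) ∧ IsClassB2 E x)) ∧
  -- (A2) extensionality
  (∀ A B : M, (∀ x, E x A ↔ E x B) → A = B) ∧
  -- (A3) reflection: φ(A) → ∃u (A(u) ∧ φ^{PP(u ∩ V₀)}(A^u)), for φ with one free variable
  (∀ φ : FOF, φ.free ⊆ {0} → ∀ ρ : ℕ → M,
      FOF.Eval E (fun _ => True) φ ρ →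
      ∃ u w b : M, (∀ z, E z w ↔ (E z u ∧ IsSetB2 E z)) ∧ IsSetB2 E w ∧ STCI E w ∧
        (∀ x y, E x u → E y u → ∃ p, E p u ∧ CPairI E p x y) ∧
        RelParamB2 E u (ρ 0) b ∧
        FOF.Eval E (fun x => ∀ y, E y x → ∀ z, E z y → E z w) φ (Function.update ρ 0 b)) ∧
  -- (A4) foundation
  (∀ A : M, (∃ x, E x A) → ∃ x, E x A ∧ ∀ z, ¬ (E z x ∧ E z A)) ∧
  -- (A5) choice for sets
  (∀ x : M, IsSetB2 E x →
    (∀ y y', E y x → E y' x → y ≠ y' → ¬ ∃ z, E z y ∧ E z y') →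
    ∃ x' : M, ∀ y, E y x → (∃ z, E z y) → ∃! z, E z y ∧ E z x')

end MarshallB2


section Aux

/-- Pointwise-equivalent domain predicates give equivalent evaluation. -/
theorem eval_congr {M : Type u} (E : M → M → Prop) {D D' : M → Prop}
    (h : ∀ x, D x ↔ D' x) :
    ∀ (φ : FOF) (ρ : ℕ → M), FOF.Eval E D φ ρ ↔ FOF.Eval E D' φ ρ
  | .eq i j, ρ => Iff.rfl
  | .mem i j, ρ => Iff.rfl
  | .not φ, ρ => by simp only [FOF.Eval]; rw [eval_congr E h φ]
  | .and φ ψ, ρ => by simp only [FOF.Eval]; rw [eval_congr E h φ, eval_congr E h ψ]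
  | .or φ ψ, ρ => by simp only [FOF.Eval]; rw [eval_congr E h φ, eval_congr E h ψ]
  | .all i φ, ρ => by
      simp only [FOF.Eval]
      exact forall_congr' fun x => imp_congr (h x) (eval_congr E h φ _)
  | .ex i φ, ρ => by
      simp only [FOF.Eval]
      exact exists_congr fun x => and_congr (h x) (eval_congr E h φ _)

/-- Syntactic relativization of quantifiers to the guard `∃ c, x ∈ c`. -/
def relCl : FOF → FOF
  | .eq i j => .eq i j
  | .mem i j => .mem i j
  | .not φ => .not (relCl φ)
  | .and φ ψ => .and (relCl φ) (relCl ψ)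
  | .or φ ψ => .or (relCl φ) (relCl ψ)
  | .all i φ => .all i (.or (.not (.ex (i+1) (.mem i (i+1)))) (relCl φ))
  | .ex i φ => .ex i (.and (.ex (i+1) (.mem i (i+1))) (relCl φ))

theorem free_relCl_subset : ∀ φ : FOF, (relCl φ).free ⊆ φ.free
  | .eq i j => subset_rfl
  | .mem i j => subset_rfl
  | .not φ => free_relCl_subset φ
  | .and φ ψ => Set.union_subset_union (free_relCl_subset φ) (free_relCl_subset ψ)
  | .or φ ψ => Set.union_subset_union (free_relCl_subset φ) (free_relCl_subset ψ)
  | .all i φ => by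
      have ih := free_relCl_subset φ
      intro x hx
      simp only [relCl, FOF.free, Set.mem_diff, Set.mem_union, Set.mem_singleton_iff,
        Set.mem_insert_iff] at hx ⊢
      rcases hx with ⟨h1 | h1, h2⟩
      · exact absurd (h1.1.resolve_right h1.2) h2
      · exact ⟨ih h1, h2⟩
  | .ex i φ => by
      have ih := free_relCl_subset φ
      intro x hx
      simp only [relCl, FOF.free, Set.mem_diff, Set.mem_union, Set.mem_singleton_iff,
        Set.mem_insert_iff] at hx ⊢
      rcases hx with ⟨h1 | h1, h2⟩
      · exact absurd (h1.1.resolve_right h1.2) h2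
      · exact ⟨ih h1, h2⟩

theorem eval_relCl {M : Type u} (E : M → M → Prop) (D : M → Prop) :
    ∀ (φ : FOF) (ρ : ℕ → M),
      FOF.Eval E D (relCl φ) ρ ↔ FOF.Eval E (fun x => D x ∧ ∃ c, D c ∧ E x c) φ ρ
  | .eq i j, ρ => Iff.rfl
  | .mem i j, ρ => Iff.rfl
  | .not φ, ρ => by simp only [relCl, FOF.Eval]; rw [eval_relCl E D φ]
  | .and φ ψ, ρ => by
      simp only [relCl, FOF.Eval]; rw [eval_relCl E D φ, eval_relCl E D ψ]
  | .or φ ψ, ρ => by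
      simp only [relCl, FOF.Eval]; rw [eval_relCl E D φ, eval_relCl E D ψ]
  | .all i φ, ρ => by
      have hne : i ≠ i + 1 := Nat.ne_of_lt (Nat.lt_succ_self i)
      simp only [relCl, FOF.Eval]
      have hg : ∀ x : M,
          (∃ c, D c ∧ E (Function.update (Function.update ρ i x) (i+1) c i)
            (Function.update (Function.update ρ i x) (i+1) c (i+1))) ↔ ∃ c, D c ∧ E x c := by
        intro x
        constructor <;> rintro ⟨c, hc, hE⟩ <;> refine ⟨c, hc, ?_⟩ <;>
          simpa [Function.update_of_ne hne, Function.update_self] using hE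
      constructor
      · rintro H x ⟨hx, hc⟩
        rcases H x hx with hcon | hB
        · exact absurd ((hg x).mpr hc) hcon
        · exact (eval_relCl E D φ _).mp hB
      · intro H x hx
        by_cases hc : ∃ c, D c ∧ E x c
        · exact Or.inr ((eval_relCl E D φ _).mpr (H x ⟨hx, hc⟩))
        · exact Or.inl fun hcon => hc ((hg x).mp hcon)
  | .ex i φ, ρ => by
      have hne : i ≠ i + 1 := Nat.ne_of_lt (Nat.lt_succ_self i)
      simp only [relCl, FOF.Eval]
      have hg : ∀ x : M,
          (∃ c, D c ∧ E (Function.update (Function.update ρ i x) (i+1) c i)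
            (Function.update (Function.update ρ i x) (i+1) c (i+1))) ↔ ∃ c, D c ∧ E x c := by
        intro x
        constructor <;> rintro ⟨c, hc, hE⟩ <;> refine ⟨c, hc, ?_⟩ <;>
          simpa [Function.update_of_ne hne, Function.update_self] using hE
      constructor
      · rintro ⟨x, hx, hgx, hB⟩
        exact ⟨x, ⟨hx, (hg x).mp hgx⟩, (eval_relCl E D φ _).mp hB⟩
      · rintro ⟨x, ⟨hx, hgx⟩, hB⟩
        exact ⟨x, hx, (hg x).mpr hgx, (eval_relCl E D φ _).mpr hB⟩

theorem update_val {M : Type u} {P : M → Prop} (ρ : ℕ → {x // P x}) (j : ℕ) (x : {x // P x}) :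
    (fun i => (Function.update ρ j x i).1) = Function.update (fun i => (ρ i).1) j x.1 := by
  funext i
  rcases eq_or_ne i j with rfl | h
  · simp
  · simp [Function.update_of_ne h]

/-- Transfer of evaluation between the substructure of classes and the big structure. -/
theorem eval_subtype {M : Type u} (E : M → M → Prop) (D : M → Prop) :
    ∀ (φ : FOF) (ρ : ℕ → {x // IsClassB2 E x}),
      FOF.Eval (fun a b : {x // IsClassB2 E x} => E a.1 b.1) (fun x => D x.1) φ ρ ↔
        FOF.Eval E (fun x => IsClassB2 E x ∧ D x) φ (fun i => (ρ i).1)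
  | .eq i j, ρ => by
      simp only [FOF.Eval]
      exact Subtype.ext_iff
  | .mem i j, ρ => Iff.rfl
  | .not φ, ρ => by simp only [FOF.Eval]; rw [eval_subtype E D φ]
  | .and φ ψ, ρ => by
      simp only [FOF.Eval]; rw [eval_subtype E D φ, eval_subtype E D ψ]
  | .or φ ψ, ρ => by
      simp only [FOF.Eval]; rw [eval_subtype E D φ, eval_subtype E D ψ]
  | .all i φ, ρ => by
      simp only [FOF.Eval]
      constructor
      · intro H x hx
        have h1 := (eval_subtype E D φ _).mp (H ⟨x, hx.1⟩ hx.2)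
        rwa [update_val] at h1
      · intro H x hx
        rw [eval_subtype E D φ, update_val]
        exact H x.1 ⟨x.2, hx⟩
  | .ex i φ, ρ => by
      simp only [FOF.Eval]
      constructor
      · rintro ⟨x, hx, hB⟩
        have h1 := (eval_subtype E D φ _).mp hB
        rw [update_val] at h1
        exact ⟨x.1, ⟨x.2, hx⟩, h1⟩
      · rintro ⟨x, hx, hB⟩
        refine ⟨⟨x, hx.1⟩, hx.2, ?_⟩
        rw [eval_subtype E D φ, update_val]
        exact hB

/-- From 2-class specification: singleton 2-classes of classes. -/
theorem singleton2 {M : Type u} {E : M → M → Prop}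
    (hspec : ∀ (φ : FOF) (ρ : ℕ → M), ∃ A : M, ∀ x,
      E x A ↔ (FOF.Eval E (fun _ => True) φ (Function.update ρ 0 x) ∧ IsClassB2 E x))
    (b : M) : ∃ s, ∀ z, E z s ↔ (z = b ∧ IsClassB2 E z) := by
  obtain ⟨s, hs⟩ := hspec (.eq 0 1) (fun _ => b)
  refine ⟨s, fun z => ?_⟩
  rw [hs z]
  simp [FOF.Eval, Function.update]

theorem clOfSet {M : Type u} {E : M → M → Prop} {x : M} (h : IsSetB2 E x) :
    IsClassB2 E x := by
  obtain ⟨c, -, hc⟩ := h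
  exact ⟨c, hc⟩

theorem memSet {M : Type u} {E : M → M → Prop} {x c : M} (hc : IsClassB2 E c)
    (hx : E x c) : IsSetB2 E x := ⟨c, hc, hx⟩

/-- Lemma L: every set belongs to a supertransitive set. -/
theorem lemL {M : Type u} {E : M → M → Prop} (h2 : SatB2 E) (A : M) (hA : IsSetB2 E A) :
    ∃ w, IsSetB2 E w ∧ STCI E w ∧ E A w := by
  obtain ⟨s, hs⟩ := singleton2 h2.1 A
  have hfree : (FOF.ex 1 (FOF.mem 1 0)).free ⊆ {0} := by
    intro x hx
    simp only [FOF.free, Set.mem_diff, Set.mem_insert_iff, Set.mem_singleton_iff] at hx ⊢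
    omega
  have hAs : E A s := (hs A).mpr ⟨rfl, clOfSet hA⟩
  have htrue : FOF.Eval E (fun _ => True) (.ex 1 (.mem 1 0)) (fun _ => s) := by
    exact ⟨A, trivial, by simpa [FOF.Eval, Function.update] using hAs⟩
  obtain ⟨u, w, b, hw, hwSet, hwSTC, -, hrel, hEv⟩ := h2.2.2.1 _ hfree (fun _ => s) htrue
  obtain ⟨y, -, hyb⟩ :
      ∃ y, (∀ y', E y' y → ∀ z, E z y' → E z w) ∧ E y b := by
    simpa [FOF.Eval, Function.update] using hEv
  have hAu : E A u := by
    rcases hrel with ⟨-, hb⟩ | ⟨-, hb⟩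
    · obtain ⟨hys, hyu⟩ := (hb y).mp hyb
      obtain ⟨rfl, -⟩ := (hs y).mp hys
      exact hyu
    · obtain ⟨x, hxs, hxu, -⟩ := (hb y).mp hyb
      obtain ⟨rfl, -⟩ := (hs x).mp hxs
      exact hxu
  exact ⟨w, hwSet, hwSTC, (hw A).mpr ⟨hAu, hA⟩⟩

/-- Lemma C: every 2-class all of whose members are sets is a class. -/
theorem lemC {M : Type u} {E : M → M → Prop} (h2 : SatB2 E) (A : M)
    (hA : ∀ z, E z A → IsSetB2 E z) : IsClassB2 E A := by
  by_contra hcl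
  have hfree : (FOF.not (.ex 1 (.mem 0 1))).free ⊆ {0} := by
    intro x hx
    simp only [FOF.free, Set.mem_diff, Set.mem_insert_iff, Set.mem_singleton_iff] at hx ⊢
    omega
  have htrue : FOF.Eval E (fun _ => True) (.not (.ex 1 (.mem 0 1))) (fun _ => A) := by
    simp only [FOF.Eval, not_exists]
    intro c hc
    refine hcl ⟨c, ?_⟩
    simpa [Function.update] using hc.2
  obtain ⟨u, w, b, hw, hwSet, ⟨htr, hsup⟩, -, hrel, hEv⟩ :=
    h2.2.2.1 _ hfree (fun _ => A) htrue
  have hnb : ¬ ∃ c, (∀ y, E y c → ∀ z, E z y → E z w) ∧ E b c := by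
    simpa [FOF.Eval, Function.update] using hEv
  rcases hrel with ⟨hclA, -⟩ | ⟨-, hb⟩
  · exact hcl hclA
  · have hwu : ∀ z, E z w → E z u := fun z hz => ((hw z).mp hz).1
    have hbw : ∀ z, E z b → E z w := by
      intro z hz
      obtain ⟨x, hxA, hxu, hzx⟩ := (hb z).mp hz
      have hxw : E x w := (hw x).mpr ⟨hxu, hA x hxA⟩
      have hzeq : z = x := by
        apply h2.2.1
        intro t
        rw [hzx t]
        exact ⟨fun h => h.1, fun h => ⟨h, hwu t (htr x hxw t h)⟩⟩
      rw [hzeq]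
      exact hxw
    obtain ⟨w', hw'Set, ⟨htr', hsup'⟩, hww'⟩ := lemL h2 w hwSet
    have hbcl : IsClassB2 E b := ⟨w', hsup' w hww' b hbw⟩
    obtain ⟨s, hs⟩ := singleton2 h2.1 b
    refine hnb ⟨s, ?_, (hs b).mpr ⟨rfl, hbcl⟩⟩
    intro y hy z hz
    obtain ⟨rfl, -⟩ := (hs y).mp hy
    exact hbw z hz

end Aux

/- STATEMENT 17.  For every theorem `φ` of Bernays' theory `B₁` (semantically: every
sentence true in all models of `B₁`), the relativization of `φ` to `V₁` — the 2-class of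
all classes — is a theorem of Marshall's theory `B₂` (true in all models of `B₂`). -/
theorem statement17 (φ : FOF) (hφ : φ.free = ∅)
    (h : ∀ (M : Type u) (E : M → M → Prop), SatB1 E →
      ∀ ρ : ℕ → M, FOF.Eval E (fun _ => True) φ ρ) :
    ∀ (M : Type u) (E : M → M → Prop), SatB2 E →
      ∀ ρ : ℕ → M, (∀ i, IsClassB2 E (ρ i)) →
        FOF.Eval E (IsClassB2 E) φ ρ := by
  classical
  intro M E h2 ρ hρ
  have hspec := h2.1
  have hext := h2.2.1
  have hrefl := h2.2.2.1
  have hfnd := h2.2.2.2.1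
  have hch := h2.2.2.2.2
  let M1 : Type u := {x : M // IsClassB2 E x}
  let E1 : M1 → M1 → Prop := fun a b => E a.1 b.1
  have hset1 : ∀ x : M1, IsSetB1 E1 x ↔ IsSetB2 E x.1 := by
    intro x
    constructor
    · rintro ⟨c, hc⟩
      exact ⟨c.1, c.2, hc⟩
    · rintro ⟨c, hc, hxc⟩
      exact ⟨⟨c, hc⟩, hxc⟩
  -- transfer of truth between the substructure of classes and the big structure
  have htrans : ∀ (ψ : FOF) (σ : ℕ → M1),
      FOF.Eval E1 (fun _ => True) ψ σ ↔ FOF.Eval E (IsClassB2 E) ψ (fun i => (σ i).1) := by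
    intro ψ σ
    have h1 := eval_subtype E (fun _ => True) ψ σ
    exact h1.trans (eval_congr E (fun y => by simp) ψ _)
  have hclIff : ∀ y : M, (True ∧ ∃ c, True ∧ E y c) ↔ IsClassB2 E y := fun y => by
    simp [IsClassB2]
  have hsat1 : SatB1 E1 := by
    refine ⟨?_, ?_, ?_, ?_, ?_, ?_⟩
    · -- extensionality
      intro A B hAB
      apply Subtype.ext
      apply hext
      intro x
      constructor
      · intro hx
        exact (hAB ⟨x, ⟨A.1, hx⟩⟩).mp hx
      · intro hx
        exact (hAB ⟨x, ⟨B.1, hx⟩⟩).mpr hx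
    · -- class specification
      intro φ ρ0
      obtain ⟨A0, hA0⟩ := hspec ((relCl φ).and
        (.ex 1 ((FOF.mem 0 1).and (.ex 2 (.mem 1 2))))) (fun i => (ρ0 i).1)
      have hSetEval : ∀ σ : ℕ → M,
          FOF.Eval E (fun _ => True) (.ex 1 ((FOF.mem 0 1).and (.ex 2 (.mem 1 2)))) σ ↔
            IsSetB2 E (σ 0) := by
        intro σ
        simp only [FOF.Eval, IsSetB2, IsClassB2, true_and]
        constructor
        · rintro ⟨c, h1, d, h2⟩
          simp only [Function.update] at h1 h2
          norm_num at h1 h2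
          exact ⟨c, ⟨d, h2⟩, h1⟩
        · rintro ⟨c, ⟨d, hd⟩, hc⟩
          refine ⟨c, ?_, d, ?_⟩ <;> simp only [Function.update] <;> norm_num <;>
            assumption
      have hA0' : ∀ x, E x A0 ↔
          (FOF.Eval E (IsClassB2 E) φ (Function.update (fun i => (ρ0 i).1) 0 x) ∧
            IsSetB2 E x) := by
        intro x
        rw [hA0 x]
        have hupd : Function.update (fun i => (ρ0 i).1) 0 x 0 = x := by simp
        constructor
        · rintro ⟨⟨h1, h2⟩, -⟩
          rw [hSetEval, hupd] at h2
          refine ⟨?_, h2⟩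
          have h3 := (eval_relCl E (fun _ => True) φ _).mp h1
          exact (eval_congr E hclIff φ _).mp h3
        · rintro ⟨h1, h2⟩
          refine ⟨⟨?_, by rw [hSetEval, hupd]; exact h2⟩, clOfSet h2⟩
          exact (eval_relCl E (fun _ => True) φ _).mpr
            ((eval_congr E hclIff φ _).mpr h1)
      have hA0cl : IsClassB2 E A0 := lemC h2 A0 (fun z hz => ((hA0' z).mp hz).2)
      refine ⟨⟨A0, hA0cl⟩, ?_⟩
      intro x
      show E x.1 A0 ↔ _
      rw [hA0' x.1, hset1 x, htrans φ (Function.update ρ0 0 x), update_val]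
    · -- subsets
      intro A B hAset hBA
      obtain ⟨w, hwSet, ⟨htr, hsup⟩, hAw⟩ := lemL h2 A.1 ((hset1 A).mp hAset)
      have hBw : E B.1 w := hsup A.1 hAw B.1 (fun z hz => hBA ⟨z, ⟨B.1, hz⟩⟩ hz)
      exact (hset1 B).mpr (memSet (clOfSet hwSet) hBw)
    · -- reflection
      intro φ hfree ρ0 hEv
      have hEvd : FOF.Eval E (fun _ => True) (relCl φ) (fun i => (ρ0 i).1) := by
        refine (eval_relCl E (fun _ => True) φ _).mpr
          ((eval_congr E hclIff φ _).mpr ?_)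
        exact (htrans φ ρ0).mp hEv
      obtain ⟨u, w, b, hw, hwSet, hwSTC, -, hrel, hEvw⟩ :=
        hrefl (relCl φ) (fun x hx => hfree (free_relCl_subset φ hx)) (fun i => (ρ0 i).1) hEvd
      obtain ⟨htr, hsup⟩ := hwSTC
      have hwu : ∀ z, E z w → E z u := fun z hz => ((hw z).mp hz).1
      have hρ0cl : IsClassB2 E ((ρ0 0).1) := (ρ0 0).2
      have hb : ∀ z, E z b ↔ (E z ((ρ0 0).1) ∧ E z u) := by
        rcases hrel with ⟨-, hb⟩ | ⟨hn, -⟩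
        · exact hb
        · exact absurd hρ0cl hn
      have hb' : ∀ z, E z b ↔ (E z ((ρ0 0).1) ∧ E z w) := by
        intro z
        rw [hb z]
        constructor
        · rintro ⟨h1, h2⟩
          exact ⟨h1, (hw z).mpr ⟨h2, memSet hρ0cl h1⟩⟩
        · rintro ⟨h1, h2⟩
          exact ⟨h1, hwu z h2⟩
      have hbcl : IsClassB2 E b :=
        lemC h2 b (fun z hz => memSet hρ0cl ((hb z).mp hz).1)
      have hwcl := clOfSet hwSet
      refine ⟨⟨w, hwcl⟩, ⟨b, hbcl⟩, (hset1 _).mpr hwSet, ?_, ?_, ?_⟩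
      · intro y hy z hz
        exact htr y.1 hy z.1 hz
      · intro z
        exact hb' z.1
      · have step1 := (eval_relCl E (fun x => ∀ y, E y x → ∀ z, E z y → E z w) φ _).mp hEvw
        have step2 : FOF.Eval E (fun x => IsClassB2 E x ∧ ∀ z, E z x → E z w) φ
            (Function.update (fun i => (ρ0 i).1) 0 b) := by
          refine (eval_congr E (fun x => ?_) φ _).mp step1
          constructor
          · rintro ⟨h1, c, hc, hxc⟩
            exact ⟨⟨c, hxc⟩, fun z hz => hc x hxc z hz⟩
          · rintro ⟨h1, h2⟩
            obtain ⟨s, hs⟩ := singleton2 hspec x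
            refine ⟨fun y hy z hz => htr y (h2 y hy) z hz, s, ?_, (hs x).mpr ⟨rfl, h1⟩⟩
            intro y hy z hz
            obtain ⟨rfl, -⟩ := (hs y).mp hy
            exact h2 z hz
        have step3 : FOF.Eval E1 (fun x : M1 => ∀ z, E z x.1 → E z w) φ
            (Function.update ρ0 0 ⟨b, hbcl⟩) := by
          refine (eval_subtype E (fun x => ∀ z, E z x → E z w) φ _).mpr ?_
          rw [update_val]
          exact step2
        refine (eval_congr E1 (fun x => ?_) φ _).mp step3
        constructor
        · intro H z hz
          exact H z.1 hz
        · intro H z hz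
          exact H ⟨z, ⟨x.1, hz⟩⟩ hz
    · -- foundation
      rintro A ⟨x, hx⟩
      obtain ⟨y, hy1, hy2⟩ := hfnd A.1 ⟨x.1, hx⟩
      exact ⟨⟨y, ⟨A.1, hy1⟩⟩, hy1, fun z hz => hy2 z.1 hz⟩
    · -- choice
      intro x hxset hdisj
      have hxcl := x.2
      have hd : ∀ y y', E y x.1 → E y' x.1 → y ≠ y' → ¬ ∃ z, E z y ∧ E z y' := by
        rintro y y' hy hy' hne ⟨z, hz1, hz2⟩
        exact hdisj ⟨y, ⟨x.1, hy⟩⟩ ⟨y', ⟨x.1, hy'⟩⟩ hy hy'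
          (fun hEq => hne (congrArg Subtype.val hEq)) ⟨⟨z, ⟨y, hz1⟩⟩, hz1, hz2⟩
      obtain ⟨xc, hxc⟩ := hch x.1 ((hset1 x).mp hxset) hd
      obtain ⟨xd, hxd⟩ := hspec ((FOF.mem 0 1).and (.ex 2 ((FOF.mem 2 3).and (.mem 0 2))))
        (fun i => if i = 1 then xc else x.1)
      have hxd' : ∀ z, E z xd ↔ (E z xc ∧ ∃ y, E y x.1 ∧ E z y) := by
        intro z
        rw [hxd z]
        simp only [FOF.Eval, true_and]
        constructor
        · rintro ⟨⟨h1, c, h2, h3⟩, -⟩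
          simp only [Function.update] at h1 h2 h3
          norm_num at h1 h2 h3
          exact ⟨h1, c, h2, h3⟩
        · rintro ⟨h1, y, hy1, hy2⟩
          refine ⟨⟨?_, y, ?_, ?_⟩, ⟨y, hy2⟩⟩ <;> simp only [Function.update] <;>
            norm_num <;> assumption
      have hxdset : ∀ z, E z xd → IsSetB2 E z := by
        intro z hz
        obtain ⟨-, y, hy1, hy2⟩ := (hxd' z).mp hz
        exact memSet (clOfSet (memSet hxcl hy1)) hy2
      have hxdcl : IsClassB2 E xd := lemC h2 xd hxdset
      refine ⟨⟨xd, hxdcl⟩, ?_⟩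
      intro y hy hne
      obtain ⟨z, ⟨hz1, hz2⟩, huniq⟩ := hxc y.1 hy ⟨hne.choose.1, hne.choose_spec⟩
      have hzcl : IsClassB2 E z := ⟨y.1, hz1⟩
      refine ⟨⟨z, hzcl⟩, ⟨hz1, (hxd' z).mpr ⟨hz2, y.1, hy, hz1⟩⟩, ?_⟩
      rintro z2 ⟨h1, h2⟩
      apply Subtype.ext
      exact huniq z2.1 ⟨h1, ((hxd' z2.1).mp h2).1⟩
  have hfin := h M1 E1 hsat1 (fun i => ⟨ρ i, hρ i⟩)
  exact (htrans φ (fun i => ⟨ρ i, hρ i⟩)).mp hfin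
end
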